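/- Let D be a regular 4^m 2^{(n+1)-(p+1)} design with 2^k runs of resolution at least III, represented by direct-summing two-dimensional subspaces U_1, …, U_m of V = (ZMod 2)^k and two-level vectors w_1, …, w_{n+1} ∈ V such that the U_t together with the w_i span V, and whose defining relation K contains at least one nonzero word. Then there exists an index i ∈ {1, …, n+1} such that (a) the delete-one-factor projection D_(i) has minimum aberration of type m among D_(1), …, D_(n+1); (b) w_i lies in the span of U_1, …, U_m together with the vectors w_j for j ≠ i; and (c) the U_t together with {w_j : j ≠ i} span V. In particular, D is obtained from the regular 4^m 2^{n-p} design D_(i), which has 2^k distinct runs, by appending a single two-level column that is a product of columns of D_(i). (This is the key inductive step in the proof of Lemma A.2, establishing that extending minimum-aberration delete-one-factor projections yields a complete set of designs.) -/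

import Mathlib

/-- The defining relation (including the zero word) of a regular `4^m 2^{n-p}` design
represented by subspaces `U t` (four-level factors) and vectors `w i` (two-level factors)
in `V = (ZMod 2)^k`: the set of pairs `(s, u)` with each `u t ∈ U t` and
`∑ i, s i • w i + ∑ t, u t = 0`. -/
def wordSet {k m n : ℕ} (U : Fin m → Submodule (ZMod 2) (Fin k → ZMod 2))
    (w : Fin n → Fin k → ZMod 2) :
    Set ((Fin n → ZMod 2) × (Fin m → (Fin k → ZMod 2))) :=
  {su | (∀ t, su.2 t ∈ U t) ∧ (∑ i, su.1 i • w i) + (∑ t, su.2 t) = 0}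

/-- The length of a word `(s, u)`: the number of indices `i` with `s i = 1` plus the
number of four-level factors `t` with `u t ≠ 0`. -/
def wordLength {k m n : ℕ} (su : (Fin n → ZMod 2) × (Fin m → (Fin k → ZMod 2))) : ℕ :=
  (Finset.univ.filter fun i => su.1 i = 1).card +
    (Finset.univ.filter fun t => su.2 t ≠ 0).card

/-- The type of a word `(s, u)`: the number of four-level factors `t` with `u t ≠ 0`. -/
def wordType {k m n : ℕ} (su : (Fin n → ZMod 2) × (Fin m → (Fin k → ZMod 2))) : ℕ :=
  (Finset.univ.filter fun t => su.2 t ≠ 0).card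

/-- `Acount U w ℓ t` is the number `A_{ℓ,t}` of defining words of length `ℓ` and type `t`. -/
noncomputable def Acount {k m n : ℕ} (U : Fin m → Submodule (ZMod 2) (Fin k → ZMod 2))
    (w : Fin n → Fin k → ZMod 2) (ℓ t : ℕ) : ℕ :=
  Nat.card {su : (Fin n → ZMod 2) × (Fin m → (Fin k → ZMod 2)) //
    su ∈ wordSet U w ∧ su ≠ 0 ∧ wordLength su = ℓ ∧ wordType su = t}

/-- `wlpLexLt A B` says that the word length pattern of type `m` recorded by `A`
(as a function `(length, type) ↦ A_{ℓ,t}`) is lexicographically strictly smaller than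
the one recorded by `B`, where positions are ordered by increasing length and,
within a length, by decreasing type: "less aberration of type m". -/
def wlpLexLt (A B : ℕ → ℕ → ℕ) : Prop :=
  ∃ ℓ t, A ℓ t < B ℓ t ∧
    ∀ ℓ' t', (ℓ' < ℓ ∨ (ℓ' = ℓ ∧ t < t')) → A ℓ' t' = B ℓ' t'

/-
For each index `j` with `w j` outside the span of the `U t` and the other `w`'s, no defining
word involves factor `j`, so `D_(j)` has exactly the defining words of `D`; since deleting a
factor can only remove words, such a `D_(j)` never has less aberration than any `D_(i)`.
Minimising the word length pattern over the remaining indices, which exist because a nonzero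
word must involve a two-level factor (the `U t` are independent), gives the required `i`.
-/

open Function Set Submodule

lemma wlpLexLt_irrefl (A : ℕ → ℕ → ℕ) : ¬ wlpLexLt A A := by
  rintro ⟨ℓ, t, hlt, -⟩
  exact lt_irrefl _ hlt

lemma wlpLexLt.trans {A B C : ℕ → ℕ → ℕ} (hAB : wlpLexLt A B) (hBC : wlpLexLt B C) :
    wlpLexLt A C := by
  obtain ⟨ℓ₁, t₁, hlt₁, heq₁⟩ := hAB
  obtain ⟨ℓ₂, t₂, hlt₂, heq₂⟩ := hBC
  by_cases h₁₂ : ℓ₁ < ℓ₂ ∨ (ℓ₁ = ℓ₂ ∧ t₂ < t₁)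
  · refine ⟨ℓ₁, t₁, heq₂ ℓ₁ t₁ h₁₂ ▸ hlt₁, fun ℓ t h => ?_⟩
    exact (heq₁ ℓ t h).trans (heq₂ ℓ t (by omega))
  by_cases h₂₁ : ℓ₂ < ℓ₁ ∨ (ℓ₂ = ℓ₁ ∧ t₁ < t₂)
  · refine ⟨ℓ₂, t₂, (heq₁ ℓ₂ t₂ h₂₁).symm ▸ hlt₂, fun ℓ t h => ?_⟩
    exact (heq₁ ℓ t (by omega)).trans (heq₂ ℓ t h)
  obtain ⟨rfl, rfl⟩ : ℓ₁ = ℓ₂ ∧ t₁ = t₂ := by omega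
  exact ⟨ℓ₁, t₁, hlt₁.trans hlt₂, fun ℓ t h => (heq₁ ℓ t h).trans (heq₂ ℓ t h)⟩

lemma not_wlpLexLt_of_le {A B : ℕ → ℕ → ℕ} (h : ∀ ℓ t, B ℓ t ≤ A ℓ t) : ¬ wlpLexLt A B := by
  rintro ⟨ℓ, t, hlt, -⟩
  exact (h ℓ t).not_gt hlt

lemma exists_forall_not_wlpLexLt {ι : Type*} [Finite ι] (F : ι → ℕ → ℕ → ℕ) {s : Set ι}
    (hs : s.Nonempty) : ∃ i ∈ s, ∀ j ∈ s, ¬ wlpLexLt (F j) (F i) := by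
  let r : ι → ι → Prop := fun i j => wlpLexLt (F i) (F j)
  have : IsTrans ι r := ⟨fun _ _ _ => wlpLexLt.trans⟩
  have : Std.Irrefl r := ⟨fun _ => wlpLexLt_irrefl _⟩
  exact (Finite.wellFounded_of_trans_of_irrefl r).has_min s hs

lemma range_comp_succAbove {α : Type*} {n : ℕ} (w : Fin (n + 1) → α) (i : Fin (n + 1)) :
    range (w ∘ i.succAbove) = w '' {j | j ≠ i} := by
  rw [range_comp, Fin.range_succAbove]
  rfl

lemma sup_span_range_comp_succAbove {R M : Type*} [Semiring R] [AddCommMonoid M] [Module R M]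
    (P : Submodule R M) {n : ℕ} (w : Fin (n + 1) → M) (i : Fin (n + 1))
    (hi : w i ∈ P ⊔ span R (w '' {j | j ≠ i})) :
    P ⊔ span R (range (w ∘ i.succAbove)) = P ⊔ span R (range w) := by
  rw [range_comp_succAbove]
  refine le_antisymm (sup_le_sup_left (span_mono (image_subset_range _ _)) _)
    (sup_le le_sup_left (span_le.2 ?_))
  rintro _ ⟨j, rfl⟩
  rcases eq_or_ne j i with rfl | hj
  · exact hi
  · exact mem_sup_right (subset_span ⟨j, hj, rfl⟩)

section Words

variable {k m n : ℕ} (U : Fin m → Submodule (ZMod 2) (Fin k → ZMod 2))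

abbrev Word (k m n : ℕ) := (Fin n → ZMod 2) × (Fin m → Fin k → ZMod 2)

def wordsOf (w : Fin n → Fin k → ZMod 2) (ℓ t : ℕ) : Set (Word k m n) :=
  {su | su ∈ wordSet U w ∧ su ≠ 0 ∧ wordLength su = ℓ ∧ wordType su = t}

lemma fst_ne_zero_of_mem_wordSet (hU : iSupIndep U) {w : Fin n → Fin k → ZMod 2}
    {su : Word k m n} (hsu : su ∈ wordSet U w) (hne : su ≠ 0) : su.1 ≠ 0 := by
  intro hs
  obtain ⟨hu, hsum⟩ := hsu
  simp only [hs, Pi.zero_apply, zero_smul, Finset.sum_const_zero, zero_add] at hsum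
  refine hne (Prod.ext hs (funext fun t => ?_))
  exact (iSupIndep_iff_finsetSum_eq_zero_imp_eq_zero U).1 hU Finset.univ su.2
    (fun t _ => hu t) hsum t (Finset.mem_univ t)

lemma mem_sup_span_of_mem_wordSet {w : Fin n → Fin k → ZMod 2} {su : Word k m n}
    (hsu : su ∈ wordSet U w) {j : Fin n} (hj : su.1 j ≠ 0) :
    w j ∈ (⨆ t, U t) ⊔ span (ZMod 2) (w '' {x | x ≠ j}) := by
  obtain ⟨hu, hsum⟩ := hsu
  rw [← Finset.add_sum_erase _ _ (Finset.mem_univ j), add_assoc] at hsum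
  rw [← smul_mem_iff _ hj, eq_neg_of_add_eq_zero_left hsum]
  refine neg_mem (add_mem (sum_mem fun x hx => smul_mem _ _ ?_) (sum_mem fun t _ => ?_))
  · exact mem_sup_right (subset_span ⟨x, Finset.ne_of_mem_erase hx, rfl⟩)
  · exact mem_sup_left (mem_iSup_of_mem t (hu t))

/-- A word of `D_(i)` as a word of `D`, not involving factor `i`. -/
def insertZero (i : Fin (n + 1)) (su : Word k m n) : Word k m (n + 1) :=
  (i.insertNth 0 su.1, su.2)

lemma insertZero_injective (i : Fin (n + 1)) :
    Injective (insertZero (k := k) (m := m) i) := fun a b h => by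
  simp only [insertZero, Prod.mk.injEq] at h
  exact Prod.ext (by simpa using congrArg (Fin.removeNth i) h.1) h.2

lemma insertZero_eq_zero_iff (i : Fin (n + 1)) {su : Word k m n} :
    insertZero i su = 0 ↔ su = 0 := by
  have h0 : insertZero i (0 : Word k m n) = 0 := by
    ext x : 2
    · refine Fin.succAboveCases i ?_ (fun j => ?_) x <;> simp [insertZero]
    · rfl
  rw [← h0, (insertZero_injective i).eq_iff]

lemma range_insertZero (i : Fin (n + 1)) :
    range (insertZero (k := k) (m := m) i) = {su | su.1 i = 0} := by
  ext su
  refine ⟨?_, fun (hsi : su.1 i = 0) => ⟨(Fin.removeNth i su.1, su.2), ?_⟩⟩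
  · rintro ⟨x, rfl⟩
    simp [insertZero]
  · rw [insertZero, ← hsi, Fin.insertNth_self_removeNth]

lemma insertZero_mem_wordSet_iff (w : Fin (n + 1) → Fin k → ZMod 2) (i : Fin (n + 1))
    {su : Word k m n} :
    insertZero i su ∈ wordSet U w ↔ su ∈ wordSet U (w ∘ i.succAbove) := by
  simp [wordSet, insertZero, Fin.sum_univ_succAbove _ i]

lemma wordLength_insertZero (i : Fin (n + 1)) (su : Word k m n) :
    wordLength (insertZero i su) = wordLength su := by
  unfold wordLength insertZero
  congr 1
  rw [Finset.card_filter, Finset.card_filter, Fin.sum_univ_succAbove _ i]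
  simp

lemma preimage_insertZero_wordsOf (w : Fin (n + 1) → Fin k → ZMod 2) (i : Fin (n + 1))
    (ℓ t : ℕ) : insertZero i ⁻¹' wordsOf U w ℓ t = wordsOf U (w ∘ i.succAbove) ℓ t := by
  ext su
  simp only [wordsOf, mem_preimage, mem_ofPred_eq, insertZero_mem_wordSet_iff, ne_eq,
    insertZero_eq_zero_iff, wordLength_insertZero]
  rfl

lemma Acount_comp_succAbove (w : Fin (n + 1) → Fin k → ZMod 2) (i : Fin (n + 1)) (ℓ t : ℕ) :
    Acount U (w ∘ i.succAbove) ℓ t = Nat.card ↥(wordsOf U w ℓ t ∩ {su | su.1 i = 0}) := by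
  rw [← range_insertZero, ← image_preimage_eq_inter_range, preimage_insertZero_wordsOf,
    Nat.card_image_of_injective (insertZero_injective i)]
  rfl

lemma Acount_comp_succAbove_le (w : Fin (n + 1) → Fin k → ZMod 2) (i : Fin (n + 1))
    (ℓ t : ℕ) : Acount U (w ∘ i.succAbove) ℓ t ≤ Acount U w ℓ t := by
  rw [Acount_comp_succAbove]
  exact Nat.card_mono (toFinite _) inter_subset_left

lemma Acount_comp_succAbove_eq (w : Fin (n + 1) → Fin k → ZMod 2) {j : Fin (n + 1)}
    (hj : ∀ su ∈ wordSet U w, su.1 j = 0) (ℓ t : ℕ) :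
    Acount U (w ∘ j.succAbove) ℓ t = Acount U w ℓ t := by
  have hsub : wordsOf U w ℓ t ⊆ {su | su.1 j = 0} := fun su hsu => hj su hsu.1
  rw [Acount_comp_succAbove, inter_eq_left.2 hsub]
  rfl

end Words

theorem exists_minAberration_deleteOneFactor_general {k m n : ℕ}
    (U : Fin m → Submodule (ZMod 2) (Fin k → ZMod 2))
    (hUind : iSupIndep U)
    (w : Fin (n + 1) → Fin k → ZMod 2)
    (hspan : (⨆ t, U t) ⊔ Submodule.span (ZMod 2) (Set.range w) = ⊤)
    (hword : ∃ su ∈ wordSet U w, su ≠ 0) :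
    ∃ i : Fin (n + 1),
      (∀ j : Fin (n + 1),
        ¬ wlpLexLt (Acount U (w ∘ j.succAbove)) (Acount U (w ∘ i.succAbove))) ∧
      w i ∈ (⨆ t, U t) ⊔ Submodule.span (ZMod 2) (w '' {j | j ≠ i}) ∧
      (⨆ t, U t) ⊔ Submodule.span (ZMod 2) (Set.range (w ∘ i.succAbove)) = ⊤ := by
  obtain ⟨su, hsu, hne⟩ := hword
  obtain ⟨j₀, hj₀⟩ := Function.ne_iff.1 (fst_ne_zero_of_mem_wordSet U hUind hsu hne)
  let S : Set (Fin (n + 1)) := {j | w j ∈ (⨆ t, U t) ⊔ span (ZMod 2) (w '' {x | x ≠ j})}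
  obtain ⟨i, hi, hmin⟩ := exists_forall_not_wlpLexLt (fun j => Acount U (w ∘ j.succAbove))
    ⟨j₀, mem_sup_span_of_mem_wordSet U hsu hj₀⟩ (s := S)
  refine ⟨i, fun j => ?_, hi, by rw [sup_span_range_comp_succAbove _ w i hi, hspan]⟩
  by_cases hj : j ∈ S
  · exact hmin j hj
  have hj_free : ∀ su ∈ wordSet U w, su.1 j = 0 := fun su hsu =>
    not_not.1 fun h => hj (mem_sup_span_of_mem_wordSet U hsu h)
  exact not_wlpLexLt_of_le fun ℓ t =>
    (Acount_comp_succAbove_le U w i ℓ t).trans (Acount_comp_succAbove_eq U w hj_free ℓ t).ge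

/-- **Key inductive step of Lemma A.2.** For a resolution-≥III regular
`4^m 2^{(n+1)-(p+1)}` design whose defining relation contains a nonzero word, there is an
index `i` such that the delete-one-factor projection `D_(i)` has minimum aberration of
type `m` among all delete-one-factor projections, `w i` lies in the span of the `U t` and
the remaining two-level vectors, and the `U t` together with the remaining two-level
vectors still span `V`: `D` is obtained from the `2^k`-run design `D_(i)` by appending a
single two-level column that is a product of columns of `D_(i)`. -/
theorem exists_minAberration_deleteOneFactor {k m n : ℕ}
    (U : Fin m → Submodule (ZMod 2) (Fin k → ZMod 2))
    (hU2 : ∀ t, Module.finrank (ZMod 2) (U t) = 2)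
    (hUind : iSupIndep U)
    (w : Fin (n + 1) → Fin k → ZMod 2)
    (hspan : (⨆ t, U t) ⊔ Submodule.span (ZMod 2) (Set.range w) = ⊤)
    (hres : ∀ su ∈ wordSet U w, su ≠ 0 → 3 ≤ wordLength su)
    (hword : ∃ su ∈ wordSet U w, su ≠ 0) :
    ∃ i : Fin (n + 1),
      (∀ j : Fin (n + 1),
        ¬ wlpLexLt (Acount U (w ∘ j.succAbove)) (Acount U (w ∘ i.succAbove))) ∧
      w i ∈ (⨆ t, U t) ⊔ Submodule.span (ZMod 2) (w '' {j | j ≠ i}) ∧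
      (⨆ t, U t) ⊔ Submodule.span (ZMod 2) (Set.range (w ∘ i.succAbove)) = ⊤ :=
  exists_minAberration_deleteOneFactor_general U hUind w hspan hword
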